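/- arXiv:1904.13318 — 2 statements merged into one kernel-verified Lean document; each statement's English description precedes it below -/
import Mathlib

section
/- Let U be a nearest-neighbour QCA on a ring of N sites with N even and N ≥ 6. Then for every n, the subalgebra of operators generated by R_{2n+1} ∪ R_{2n+2} is exactly A_{2n+1} ⊗ A_{2n+2}, the algebra of all operators localized on the sites 2n+1 and 2n+2. -/
open scoped Kronecker

namespace QCA

variable {ι : Type} [Fintype ι] [DecidableEq ι]
variable (F : ι → Type) [∀ i, Fintype (F i)] [∀ i, DecidableEq (F i)]

/-- Configurations: the product basis labels of the lattice Hilbert space `⨂ i, ℂ^(F i)`. -/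
abbrev Conf : Type := ∀ i, F i

/-- Operators on the lattice Hilbert space, as matrices in the product basis. -/
abbrev Ops : Type := Matrix (Conf F) (Conf F) ℂ

/-- `A` is localized on the region `R` if it has the form `B ⊗ 1` with respect to the
splitting `R | Rᶜ` of the tensor factors (entrywise characterization). -/
def Localized (A : Ops F) (R : Set ι) : Prop :=
  (∀ x y : Conf F, A x y ≠ 0 → ∀ i ∉ R, x i = y i) ∧
  (∀ x y x' y' : Conf F, (∀ i ∈ R, x i = x' i) → (∀ i ∈ R, y i = y' i) →
      (∀ i ∉ R, x i = y i) → (∀ i ∉ R, x' i = y' i) → A x y = A x' y')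

/-- Heisenberg evolution `A ↦ U* A U`. -/
noncomputable def heis (U A : Ops F) : Ops F := star U * A * U

/-- The support algebra `S(𝒮, R)`: the smallest subalgebra of operators localized on `R`
such that `𝒮` is contained in (the algebra generated by) it together with the full algebra
of operators localized on `Rᶜ`. -/
noncomputable def supportAlgebra (S : Set (Ops F)) (R : Set ι) : Subalgebra ℂ (Ops F) :=
  sInf {C : Subalgebra ℂ (Ops F) |
    (C : Set (Ops F)) ⊆ {A | Localized F A R} ∧
    S ⊆ ↑(Algebra.adjoin ℂ ((C : Set (Ops F)) ∪ {A | Localized F A Rᶜ}))}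

section Ring

variable {M : ℕ} (sector : ZMod M → Finset ι)

/-- `U` is a nearest-neighbour QCA for the ring of `M` (super)cells described by `sector`:
`U` is unitary, and conjugation by `U` maps operators localized on cell `k` to operators
localized on cells `{k-1, k, k+1}`. -/
def IsRingQCA (U : Ops F) : Prop :=
  U ∈ Matrix.unitaryGroup (Conf F) ℂ ∧
  ∀ (k : ZMod M) (A : Ops F), Localized F A ↑(sector k) →
    Localized F (heis F U A) (↑(sector (k - 1)) ∪ ↑(sector k) ∪ ↑(sector (k + 1)))

/-- The even support algebra `R_k = S(u(A_k ⊗ A_{k+1}), A_{k-1} ⊗ A_k)` (`k` an even site). -/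
noncomputable def REven (U : Ops F) (k : ZMod M) : Subalgebra ℂ (Ops F) :=
  supportAlgebra F (heis F U '' {A | Localized F A (↑(sector k) ∪ ↑(sector (k + 1)))})
    (↑(sector (k - 1)) ∪ ↑(sector k))

/-- The odd support algebra `R_{k+1} = S(u(A_k ⊗ A_{k+1}), A_{k+1} ⊗ A_{k+2})` (`k` even). -/
noncomputable def ROdd (U : Ops F) (k : ZMod M) : Subalgebra ℂ (Ops F) :=
  supportAlgebra F (heis F U '' {A | Localized F A (↑(sector k) ∪ ↑(sector (k + 1)))})
    (↑(sector (k + 1)) ∪ ↑(sector (k + 2)))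

/-- The Hilbert space dimension of the (super)cell `k`. -/
def siteDim (k : ZMod M) : ℕ := ∏ i ∈ sector k, Fintype.card (F i)

/-- `r` with `C ≅ M_r(ℂ)`, recovered as the square root of the linear dimension of `C`. -/
noncomputable def rdim (C : Subalgebra ℂ (Ops F)) : ℕ := Nat.sqrt (Module.finrank ℂ C)

/-- The GNVW index `ind[U] = r_{2n} / d_{2n}`, evaluated at the even site `2n = 0`. -/
noncomputable def ringIndex (U : Ops F) : ℚ :=
  (rdim F (REven F sector U 0) : ℚ) / (siteDim F sector 0 : ℚ)

end Ring

/-- The standard ring structure: one site per cell. -/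
def stdSector (N : ℕ) : ZMod N → Finset (ZMod N) := fun n => {n}

/-- The embedding of a one-site operator at site `i` into the lattice algebra. -/
noncomputable def embedAt (i : ι) (B : Matrix (F i) (F i) ℂ) : Ops F :=
  fun x y => (if ∀ j, j ≠ i → x j = y j then 1 else 0) * B (x i) (y i)

/-- Pairing of configurations of two parallel lattices. -/
def confPairEquiv (G : ι → Type) [∀ i, Fintype (G i)] [∀ i, DecidableEq (G i)] :
    (Conf F × Conf G) ≃ Conf (fun i => F i × G i) where
  toFun p := fun i => (p.1 i, p.2 i)
  invFun x := (fun i => (x i).1, fun i => (x i).2)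
  left_inv _ := rfl
  right_inv _ := rfl

/-- The tensor product `A ⊗ B` of operators on two parallel lattices, as an operator on the
lattice whose site `i` carries the qudit `F i × G i`. -/
noncomputable def tensorOps (G : ι → Type) [∀ i, Fintype (G i)] [∀ i, DecidableEq (G i)]
    (A : Ops F) (B : Ops G) : Ops (fun i => F i × G i) :=
  Matrix.reindex (confPairEquiv F G) (confPairEquiv F G) (A ⊗ₖ B)

end QCA

/-! Write `A ∈ A_R`, `R = {2n+1, 2n+2}`, as `u(A')`; `A'` is a polynomial in one-site operators.
Those at sites `2n, 2n+1` (resp. `2n+2, 2n+3`) are mapped into `u(A_{2n} ⊗ A_{2n+1})`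
(resp. `u(A_{2n+2} ⊗ A_{2n+3})`), which lies in the algebra generated by `R_{2n+1}` (resp.
`R_{2n+2}`) and `A_{Rᶜ}`; by locality all other one-site operators are mapped into `A_{Rᶜ}`.
So `A` lies in the algebra generated by `R_{2n+1}`, `R_{2n+2}` and `A_{Rᶜ}`, and since `A` is
localized on `R`, a partial matrix entry on `Rᶜ` strips off the `A_{Rᶜ}` factors. -/

namespace QCA

open scoped Classical

section Lattice

variable {ι : Type} {F : ι → Type} {A B : Ops F} {R S : Set ι}

section Basic

namespace Localized

lemma apply_eq_zero (h : Localized F A R) {x y : Conf F} {i : ι} (hi : i ∉ R)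
    (hxy : x i ≠ y i) : A x y = 0 := by
  by_contra hA
  exact hxy (h.1 x y hA i hi)

lemma mono (h : Localized F A R) (hRS : R ⊆ S) : Localized F A S := by
  refine ⟨fun x y hA i hi => h.1 x y hA i fun hR => hi (hRS hR), ?_⟩
  intro x y x' y' hx hy hxy hxy'
  by_cases hd : ∀ i ∉ R, x i = y i
  · refine h.2 x y x' y' (fun i hi => hx i (hRS hi)) (fun i hi => hy i (hRS hi)) hd ?_
    intro i hi
    by_cases hiS : i ∈ S
    · rw [← hx i hiS, ← hy i hiS, hd i hi]
    · exact hxy' i hiS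
  · push Not at hd
    obtain ⟨i, hiR, hne⟩ := hd
    have hiS : i ∈ S := by_contra fun hiS => hne (hxy i hiS)
    rw [h.apply_eq_zero hiR hne, h.apply_eq_zero hiR (by rwa [← hx i hiS, ← hy i hiS])]

lemma smul (h : Localized F A R) (c : ℂ) : Localized F (c • A) R :=
  ⟨fun x y hA => h.1 x y (right_ne_zero_of_mul hA), fun x y x' y' hx hy hxy hxy' => by
    simp only [Matrix.smul_apply, h.2 x y x' y' hx hy hxy hxy']⟩

lemma add (hA : Localized F A R) (hB : Localized F B R) : Localized F (A + B) R := by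
  refine ⟨fun x y hAB i hi => ?_, fun x y x' y' hx hy hxy hxy' => by
    simp only [Matrix.add_apply, hA.2 x y x' y' hx hy hxy hxy', hB.2 x y x' y' hx hy hxy hxy']⟩
  by_cases hAxy : A x y = 0
  · exact hB.1 x y (by simpa [hAxy] using hAB) i hi
  · exact hA.1 x y hAxy i hi

end Localized

lemma localized_univ (A : Ops F) : Localized F A Set.univ :=
  ⟨fun _ _ _ i hi => absurd (Set.mem_univ i) hi, fun x y x' y' hx hy _ _ => by
    rw [funext fun i => hx i (Set.mem_univ i), funext fun i => hy i (Set.mem_univ i)]⟩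

lemma localized_one [Fintype ι] [∀ i, DecidableEq (F i)] (R : Set ι) :
    Localized F (1 : Ops F) R := by
  refine ⟨fun x y h i _ => by rw [of_not_not fun hxy => h (Matrix.one_apply_ne hxy)], ?_⟩
  intro x y x' y' hx hy hxy hxy'
  have hiff : x = y ↔ x' = y' := by
    simp only [funext_iff]
    refine forall_congr' fun i => ?_
    by_cases hi : i ∈ R
    · rw [hx i hi, hy i hi]
    · simp only [hxy i hi, hxy' i hi]
  simp only [Matrix.one_apply, hiff]

end Basic

section PartialEntry

noncomputable def splice (R : Set ι) (x z : Conf F) : Conf F :=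
  fun i => if i ∈ R then x i else z i

@[simp] lemma splice_of_mem {x z : Conf F} {i : ι} (hi : i ∈ R) : splice R x z i = x i :=
  if_pos hi

@[simp] lemma splice_of_notMem {x z : Conf F} {i : ι} (hi : i ∉ R) : splice R x z i = z i :=
  if_neg hi

lemma eq_splice {x z v : Conf F} (hR : ∀ i ∈ R, v i = x i) (hRc : ∀ i ∉ R, v i = z i) :
    v = splice R x z :=
  funext fun i => by by_cases hi : i ∈ R <;> simp [hi, hR, hRc]

/-- The matrix unit `|z⟩⟨w|` on the sites of `B`, tensored with the identity on `Bᶜ`. -/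
noncomputable def matrixUnitOn (B : Set ι) (z w : Conf F) : Ops F :=
  Matrix.of fun x y => if (∀ i ∉ B, x i = y i) ∧ ∀ i ∈ B, x i = z i ∧ y i = w i then 1 else 0

/-- The partial matrix entry `⟨z|A|w⟩` on the sites of `Rᶜ`, tensored with the identity on `Rᶜ`;
these are the coefficients `b_j` of the support algebra `S(·, A_R)`. -/
noncomputable def partialEntry (R : Set ι) (z w : Conf F) : Ops F →ₗ[ℂ] Ops F where
  toFun A := Matrix.of fun x y =>
    if ∀ i ∉ R, x i = y i then A (splice R x z) (splice R y w) else 0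
  map_add' A B := by
    ext x y
    simp only [Matrix.of_apply, Matrix.add_apply]
    split_ifs <;> simp
  map_smul' c A := by
    ext x y
    simp only [Matrix.of_apply, Matrix.smul_apply, RingHom.id_apply]
    split_ifs <;> simp

lemma partialEntry_apply (z w : Conf F) (A : Ops F) (x y : Conf F) :
    partialEntry R z w A x y =
      if ∀ i ∉ R, x i = y i then A (splice R x z) (splice R y w) else 0 :=
  rfl

lemma matrixUnitOn_localized (B : Set ι) (z w : Conf F) :
    Localized F (matrixUnitOn B z w) B := by
  refine ⟨fun x y h i hi => ?_, fun x y x' y' hx hy hxy hxy' => ?_⟩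
  · by_contra hne
    exact h (if_neg fun hc => hne (hc.1 i hi))
  · simp only [matrixUnitOn, Matrix.of_apply]
    refine if_congr ⟨fun ⟨_, h⟩ => ⟨hxy', fun i hi => ?_⟩, fun ⟨_, h⟩ => ⟨hxy, fun i hi => ?_⟩⟩
      rfl rfl
    · rw [← hx i hi, ← hy i hi]; exact h i hi
    · rw [hx i hi, hy i hi]; exact h i hi

lemma Localized.partialEntry {V : Set ι} (hA : Localized F A (Rᶜ ∪ V)) (z w : Conf F) :
    Localized F (partialEntry R z w A) V := by
  refine ⟨fun x y h i hi => ?_, fun x y x' y' hx hy hxy hxy' => ?_⟩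
  · rw [partialEntry_apply] at h
    split_ifs at h with hR
    · by_cases hiR : i ∈ R
      · simpa [hiR] using hA.1 _ _ h i (by simp [hiR, hi])
      · exact hR i hiR
    · exact absurd rfl h
  · have hcond : (∀ i ∉ R, x i = y i) ↔ ∀ i ∉ R, x' i = y' i := by
      refine forall₂_congr fun i _ => ?_
      by_cases hiV : i ∈ V
      · rw [hx i hiV, hy i hiV]
      · simp only [hxy i hiV, hxy' i hiV]
    simp only [partialEntry_apply, hcond]
    split_ifs with h
    · refine hA.2 _ _ _ _ (fun i hi => ?_) (fun i hi => ?_) (fun i hi => ?_) fun i hi => ?_ <;>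
        by_cases hiR : i ∈ R <;> simp_all
    · rfl

lemma partialEntry_localized (z w : Conf F) (A : Ops F) :
    Localized F (partialEntry R z w A) R :=
  ((localized_univ A).mono (Set.compl_union_self R).ge).partialEntry z w

lemma partialEntry_self (hA : Localized F A R) (z : Conf F) : partialEntry R z z A = A := by
  ext x y
  rw [partialEntry_apply]
  split_ifs with h
  · exact hA.2 _ _ _ _ (fun i hi => by simp [hi]) (fun i hi => by simp [hi])
      (fun i hi => by simp [hi]) h
  · push Not at h
    obtain ⟨i, hi, hne⟩ := h
    exact (hA.apply_eq_zero hi hne).symm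

end PartialEntry

section Products

variable [Fintype ι] [DecidableEq ι] [∀ i, Fintype (F i)]

lemma Localized.mul_apply_of_disjoint (hA : Localized F A R) (hB : Localized F B S)
    (hRS : Disjoint R S) (x y : Conf F) :
    (A * B) x y = A x (splice R y x) * B (splice R y x) y := by
  refine Fintype.sum_eq_single (f := fun t => A x t * B t y) _ fun t ht => ?_
  obtain ⟨i, hi⟩ := Function.ne_iff.1 ht
  by_cases hiR : i ∈ R
  · rw [splice_of_mem hiR] at hi
    rw [hB.apply_eq_zero (Set.disjoint_left.1 hRS hiR) hi, mul_zero]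
  · rw [splice_of_notMem hiR] at hi
    rw [hA.apply_eq_zero hiR (Ne.symm hi), zero_mul]

lemma Localized.commute (hA : Localized F A R) (hB : Localized F B S) (hRS : Disjoint R S) :
    Commute A B := by
  ext x y
  rw [hA.mul_apply_of_disjoint hB hRS, hB.mul_apply_of_disjoint hA hRS.symm]
  have hR : ∀ i ∈ R, i ∉ S := fun i hi => Set.disjoint_left.1 hRS hi
  by_cases hd : ∀ i ∉ R, i ∉ S → x i = y i
  · have hA' : A x (splice R y x) = A (splice S y x) y := by
      refine hA.2 _ _ _ _ (fun i hi => ?_) (fun i hi => ?_) (fun i hi => ?_) fun i hi => ?_ <;>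
        by_cases hiS : i ∈ S <;> simp_all
    have hB' : B (splice R y x) y = B x (splice S y x) := by
      refine hB.2 _ _ _ _ (fun i hi => ?_) (fun i hi => ?_) (fun i hi => ?_) fun i hi => ?_ <;>
        by_cases hiR : i ∈ R <;> simp_all
    rw [hA', hB', mul_comm]
  · push Not at hd
    obtain ⟨i, hiR, hiS, hne⟩ := hd
    have hB0 : B (splice R y x) y = 0 := hB.apply_eq_zero hiS (by simpa [hiR] using hne)
    have hA0 : A (splice S y x) y = 0 := hA.apply_eq_zero hiR (by simpa [hiS] using hne)
    rw [hB0, hA0, mul_zero, mul_zero]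

lemma partialEntry_mul {c m : Ops F} (hc : Localized F c R) (hm : Localized F m Rᶜ)
    (z w : Conf F) : partialEntry R z w (c * m) = m z (splice R z w) • c := by
  ext x y
  rw [partialEntry_apply, Matrix.smul_apply, smul_eq_mul]
  split_ifs with h
  · rw [hc.mul_apply_of_disjoint hm disjoint_compl_right, mul_comm]
    congr 1
    · refine hm.2 _ _ _ _ (fun i hi => ?_) (fun i hi => ?_) (fun i hi => ?_) fun i hi => ?_ <;>
        by_cases hiR : i ∈ R <;> simp_all
    · refine hc.2 _ _ _ _ (fun i hi => ?_) (fun i hi => ?_) (fun i hi => ?_) fun i hi => ?_ <;>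
        by_cases hiR : i ∈ R <;> simp_all
  · push Not at h
    obtain ⟨i, hi, hne⟩ := h
    rw [hc.apply_eq_zero hi hne, mul_zero]

lemma matrixUnitOn_compl_mul_partialEntry_apply {z w x y : Conf F} (A : Ops F)
    (hx : ∀ i ∉ R, x i = z i) (hy : ∀ i ∉ R, y i = w i) :
    (matrixUnitOn Rᶜ z w * partialEntry R z w A) x y = A x y := by
  rw [(matrixUnitOn_localized _ z w).mul_apply_of_disjoint (partialEntry_localized z w A)
    disjoint_compl_left]
  have hE : matrixUnitOn Rᶜ z w x (splice Rᶜ y x) = 1 := by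
    refine if_pos ⟨fun i hi => ?_, fun i hi => ?_⟩
    · rw [splice_of_notMem hi]
    · rw [splice_of_mem hi]; exact ⟨hx i hi, hy i hi⟩
  have hP : partialEntry R z w A (splice Rᶜ y x) y = A x y := by
    rw [partialEntry_apply, if_pos fun i (hi : i ∉ R) => splice_of_mem (R := Rᶜ) hi]
    congr 1 <;> funext i <;> by_cases hi : i ∈ R <;> simp [hi, hx i, hy i]
  rw [hE, hP, one_mul]

lemma matrixUnitOn_compl_mul_partialEntry_apply_eq_zero {z w x y : Conf F} (A : Ops F)
    (h : ¬((∀ i ∉ R, x i = z i) ∧ ∀ i ∉ R, y i = w i)) :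
    (matrixUnitOn Rᶜ z w * partialEntry R z w A) x y = 0 := by
  rw [(matrixUnitOn_localized _ z w).mul_apply_of_disjoint (partialEntry_localized z w A)
    disjoint_compl_left]
  refine mul_eq_zero_of_left (if_neg fun hE => h ⟨fun i hi => (hE.2 i hi).1, fun i hi => ?_⟩) _
  simpa [hi] using (hE.2 i hi).2

theorem sum_matrixUnitOn_mul_partialEntry (z₀ : Conf F) (R : Set ι) (A : Ops F) :
    ∑ z : Conf F with ∀ i ∈ R, z i = z₀ i, ∑ w : Conf F with ∀ i ∈ R, w i = z₀ i,
      matrixUnitOn Rᶜ z w * partialEntry R z w A = A := by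
  -- `z` and `w` run through one representative of each configuration of `Rᶜ`
  ext x y
  have hmem : ∀ v : Conf F, splice R z₀ v ∈ ({z | ∀ i ∈ R, z i = z₀ i} : Finset (Conf F)) :=
    fun v => Finset.mem_filter.2 ⟨Finset.mem_univ _, fun i hi => splice_of_mem hi⟩
  have hne : ∀ v z : Conf F, z ∈ ({z | ∀ i ∈ R, z i = z₀ i} : Finset (Conf F)) →
      z ≠ splice R z₀ v → ¬∀ i ∉ R, v i = z i := fun v z hz hzv hv =>
    hzv (eq_splice (Finset.mem_filter.1 hz).2 fun i hi => (hv i hi).symm)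
  rw [Matrix.sum_apply, Finset.sum_eq_single_of_mem _ (hmem x) fun z hz hzx => ?_,
    Matrix.sum_apply, Finset.sum_eq_single_of_mem _ (hmem y) fun w hw hwy => ?_]
  · exact matrixUnitOn_compl_mul_partialEntry_apply A (fun i hi => by simp [hi])
      fun i hi => by simp [hi]
  · exact matrixUnitOn_compl_mul_partialEntry_apply_eq_zero A fun h => hne y w hw hwy h.2
  · rw [Matrix.sum_apply]
    exact Finset.sum_eq_zero fun w _ =>
      matrixUnitOn_compl_mul_partialEntry_apply_eq_zero A fun h => hne x z hz hzx h.1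

end Products

section Algebras

variable [Fintype ι] [DecidableEq ι] [∀ i, Fintype (F i)] [∀ i, DecidableEq (F i)]

lemma Localized.mul (hA : Localized F A R) (hB : Localized F B R) : Localized F (A * B) R := by
  constructor
  · intro x y hAB i hi
    obtain ⟨t, -, ht⟩ := Finset.exists_ne_zero_of_sum_ne_zero hAB
    rw [hA.1 x t (left_ne_zero_of_mul ht) i hi, hB.1 t y (right_ne_zero_of_mul ht) i hi]
  · intro x y x' y' hx hy hxy hxy'
    -- reindex the sum over `t` by swapping the labels `x i` and `x' i` at every site `i ∉ R`
    let σ : Conf F ≃ Conf F := Equiv.piCongrRight fun i =>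
      if i ∈ R then Equiv.refl (F i) else Equiv.swap (x i) (x' i)
    have hσR : ∀ t, ∀ i ∈ R, σ t i = t i := fun t i hi => by simp [σ, hi]
    have hσ : ∀ t, ∀ i ∉ R, σ t i = Equiv.swap (x i) (x' i) (t i) := fun t i hi => by simp [σ, hi]
    refine Fintype.sum_equiv σ (fun t => A x t * B t y) (fun t => A x' t * B t y') fun t => ?_
    by_cases ht : ∀ i ∉ R, t i = x i
    · have hσt : ∀ i ∉ R, x' i = σ t i := fun i hi => by
        rw [hσ t i hi, ht i hi, Equiv.swap_apply_left]
      rw [hA.2 x t x' (σ t) hx (fun i hi => (hσR t i hi).symm) (fun i hi => (ht i hi).symm)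
        hσt, hB.2 t y (σ t) y' (fun i hi => (hσR t i hi).symm) hy
        (fun i hi => (ht i hi).trans (hxy i hi)) fun i hi => (hσt i hi).symm.trans (hxy' i hi)]
    · push Not at ht
      obtain ⟨i, hi, hne⟩ := ht
      have hne' : σ t i ≠ y' i := by
        rw [hσ t i hi, ← hxy' i hi]
        exact fun h => hne (Equiv.injective _ (h.trans (Equiv.swap_apply_left _ _).symm))
      rw [hB.apply_eq_zero hi (by rwa [← hxy i hi]), hB.apply_eq_zero hi hne', mul_zero, mul_zero]

variable (F) in
def localAlgebra (R : Set ι) : Subalgebra ℂ (Ops F) where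
  carrier := {A | Localized F A R}
  mul_mem' := Localized.mul
  add_mem' := Localized.add
  algebraMap_mem' c := by
    simpa [Algebra.algebraMap_eq_smul_one] using (localized_one (F := F) R).smul c

@[simp] lemma mem_localAlgebra : A ∈ localAlgebra F R ↔ Localized F A R := Iff.rfl

lemma mem_of_matrixUnitOn_mem_of_partialEntry_mem {T : Subalgebra ℂ (Ops F)}
    (hE : ∀ z w, matrixUnitOn Rᶜ z w ∈ T) (hP : ∀ z w, partialEntry R z w A ∈ T) : A ∈ T := by
  rcases isEmpty_or_nonempty (Conf F) with _ | ⟨⟨z₀⟩⟩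
  · rw [(Matrix.ext fun x => isEmptyElim x : A = 0)]
    exact T.zero_mem
  · rw [← sum_matrixUnitOn_mul_partialEntry z₀ R A]
    exact sum_mem fun z _ => sum_mem fun w _ => mul_mem (hE z w) (hP z w)

lemma localAlgebra_empty : localAlgebra F ∅ = ⊥ := by
  refine eq_bot_iff.2 fun A hA => ?_
  rcases isEmpty_or_nonempty (Conf F) with _ | ⟨⟨z⟩⟩
  · rw [(Matrix.ext fun x => isEmptyElim x : A = 0)]
    exact Subalgebra.zero_mem _
  · have hA' : A = algebraMap ℂ (Ops F) (A z z) := by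
      ext x y
      rw [Algebra.algebraMap_eq_smul_one, Matrix.smul_apply, Matrix.one_apply, smul_eq_mul]
      split_ifs with hxy
      · subst hxy
        simpa using hA.2 x x z z (by simp) (by simp) (fun _ _ => rfl) fun _ _ => rfl
      · obtain ⟨i, hi⟩ := Function.ne_iff.1 hxy
        rw [hA.apply_eq_zero (Set.notMem_empty i) hi, mul_zero]
    rw [hA']
    exact Subalgebra.algebraMap_mem _ _

lemma mem_adjoin_of_localized_union {V : Set ι} (hA : Localized F A (R ∪ V)) :
    A ∈ Algebra.adjoin ℂ ((localAlgebra F R : Set (Ops F)) ∪ localAlgebra F V) :=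
  mem_of_matrixUnitOn_mem_of_partialEntry_mem (R := Rᶜ)
    (fun z w => Algebra.subset_adjoin (Or.inl (by simpa using matrixUnitOn_localized Rᶜᶜ z w)))
    fun z w => Algebra.subset_adjoin
      (Or.inr ((by rwa [compl_compl] : Localized F A (Rᶜᶜ ∪ V)).partialEntry z w))

theorem adjoin_iUnion_localAlgebra_singleton_eq_top :
    Algebra.adjoin ℂ (⋃ i, (localAlgebra F {i} : Set (Ops F))) = ⊤ := by
  suffices h : ∀ s : Finset ι,
      localAlgebra F s ≤ Algebra.adjoin ℂ (⋃ i, (localAlgebra F {i} : Set (Ops F))) by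
    exact eq_top_iff.2 fun A _ => h Finset.univ (by simpa using localized_univ A)
  intro s
  induction s using Finset.induction_on with
  | empty => simp [localAlgebra_empty]
  | insert a s _ ih =>
    intro A hA
    refine Algebra.adjoin_le (Set.union_subset (fun B hB => Algebra.subset_adjoin
      (Set.mem_iUnion.2 ⟨a, hB⟩)) ih) (mem_adjoin_of_localized_union (R := {a}) (V := s) ?_)
    rwa [Finset.coe_insert, Set.insert_eq] at hA

theorem mem_adjoin_union_compl_iff {C : Subalgebra ℂ (Ops F)} (hC : C ≤ localAlgebra F R) :
    A ∈ Algebra.adjoin ℂ ((C : Set (Ops F)) ∪ localAlgebra F Rᶜ) ↔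
      ∀ z w, partialEntry R z w A ∈ C := by
  refine ⟨fun hA z w => ?_, fun h => mem_of_matrixUnitOn_mem_of_partialEntry_mem
    (fun z w => Algebra.subset_adjoin (Or.inr (matrixUnitOn_localized Rᶜ z w)))
    fun z w => Algebra.subset_adjoin (Or.inl (h z w))⟩
  -- `A_{Rᶜ}` commutes with `C`, so the generated algebra is spanned by products `c * m`
  let P : Submonoid (Ops F) :=
    { carrier := {x | ∃ c ∈ C, ∃ m ∈ localAlgebra F Rᶜ, c * m = x}
      one_mem' := ⟨1, C.one_mem, 1, Subalgebra.one_mem _, mul_one 1⟩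
      mul_mem' := by
        rintro _ _ ⟨c, hc, m, hm, rfl⟩ ⟨c', hc', m', hm', rfl⟩
        refine ⟨c * c', C.mul_mem hc hc', m * m', Subalgebra.mul_mem _ hm hm', ?_⟩
        rw [mul_assoc c m, ← mul_assoc m c', ← ((hC hc').commute hm disjoint_compl_right).eq,
          mul_assoc c' m, mul_assoc] }
  have hcl : Submonoid.closure ((C : Set (Ops F)) ∪ localAlgebra F Rᶜ) ≤ P :=
    Submonoid.closure_le.2 (Set.union_subset (fun c hc => ⟨c, hc, 1, Subalgebra.one_mem _,
      mul_one c⟩) fun m hm => ⟨1, C.one_mem, m, hm, one_mul m⟩)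
  have hspan :
      Subalgebra.toSubmodule (Algebra.adjoin ℂ ((C : Set (Ops F)) ∪ localAlgebra F Rᶜ)) ≤
        (Subalgebra.toSubmodule C).comap (partialEntry R z w) := by
    rw [Algebra.adjoin_eq_span, Submodule.span_le]
    intro x hx
    obtain ⟨c, hc, m, hm, rfl⟩ := hcl hx
    rw [SetLike.mem_coe, Submodule.mem_comap, partialEntry_mul (hC hc) hm]
    exact C.smul_mem hc _
  exact hspan hA

theorem supportAlgebra_eq_adjoin_partialEntry (S : Set (Ops F)) (R : Set ι) :
    supportAlgebra F S R = Algebra.adjoin ℂ {x | ∃ a ∈ S, ∃ z w, partialEntry R z w a = x} := by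
  have hloc : Algebra.adjoin ℂ {x | ∃ a ∈ S, ∃ z w, partialEntry R z w a = x} ≤
      localAlgebra F R :=
    Algebra.adjoin_le fun _ ⟨a, _, z, w, hx⟩ => hx ▸ partialEntry_localized z w a
  refine le_antisymm (sInf_le ⟨hloc, fun a ha => (mem_adjoin_union_compl_iff hloc).2
    fun z w => Algebra.subset_adjoin ⟨a, ha, z, w, rfl⟩⟩) (le_sInf fun C ⟨hC, hS⟩ => ?_)
  exact Algebra.adjoin_le fun _ ⟨a, ha, z, w, hx⟩ =>
    hx ▸ (mem_adjoin_union_compl_iff hC).1 (hS ha) z w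

lemma supportAlgebra_le_localAlgebra (S : Set (Ops F)) (R : Set ι) :
    supportAlgebra F S R ≤ localAlgebra F R := by
  rw [supportAlgebra_eq_adjoin_partialEntry]
  exact Algebra.adjoin_le fun _ ⟨a, _, z, w, hx⟩ => hx ▸ partialEntry_localized z w a

lemma subset_adjoin_supportAlgebra (S : Set (Ops F)) (R : Set ι) :
    S ⊆ Algebra.adjoin ℂ ((supportAlgebra F S R : Set (Ops F)) ∪ localAlgebra F Rᶜ) :=
  fun a ha => (mem_adjoin_union_compl_iff (supportAlgebra_le_localAlgebra S R)).2 fun z w => by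
    rw [supportAlgebra_eq_adjoin_partialEntry]
    exact Algebra.subset_adjoin ⟨a, ha, z, w, rfl⟩

lemma mem_of_mem_adjoin_union_compl {C : Subalgebra ℂ (Ops F)} (hC : C ≤ localAlgebra F R)
    (hA : Localized F A R) (h : A ∈ Algebra.adjoin ℂ ((C : Set (Ops F)) ∪ localAlgebra F Rᶜ)) :
    A ∈ C := by
  rcases isEmpty_or_nonempty (Conf F) with _ | ⟨⟨z⟩⟩
  · rw [(Matrix.ext fun x => isEmptyElim x : A = 0)]
    exact C.zero_mem
  · rw [← partialEntry_self hA z]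
    exact (mem_adjoin_union_compl_iff hC).1 h z z

theorem adjoin_supportAlgebra_union_eq {f : Ops F →ₐ[ℂ] Ops F} (hf : Function.Surjective f)
    {P Q R : Set ι} (hfar : ∀ i ∉ P ∪ Q, ∀ B, Localized F B {i} → Localized F (f B) Rᶜ) :
    Algebra.adjoin ℂ ((supportAlgebra F (f '' {B | Localized F B P}) R : Set (Ops F)) ∪
      supportAlgebra F (f '' {B | Localized F B Q}) R) = localAlgebra F R := by
  set W := Algebra.adjoin ℂ ((supportAlgebra F (f '' {B | Localized F B P}) R : Set (Ops F)) ∪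
      supportAlgebra F (f '' {B | Localized F B Q}) R)
  have hW : W ≤ localAlgebra F R := Algebra.adjoin_le (Set.union_subset
    (supportAlgebra_le_localAlgebra _ R) (supportAlgebra_le_localAlgebra _ R))
  refine le_antisymm hW fun A hA => mem_of_mem_adjoin_union_compl hW hA ?_
  obtain ⟨A, rfl⟩ := hf A
  suffices h : Algebra.adjoin ℂ (⋃ i, (localAlgebra F {i} : Set (Ops F))) ≤
      (Algebra.adjoin ℂ ((W : Set (Ops F)) ∪ localAlgebra F Rᶜ)).comap f by
    exact h (adjoin_iUnion_localAlgebra_singleton_eq_top (F := F) ▸ Algebra.mem_top)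
  have hsupp : ∀ T : Set ι, supportAlgebra F (f '' {B | Localized F B T}) R ≤ W →
      ∀ i ∈ T, ∀ B, Localized F B {i} →
        f B ∈ Algebra.adjoin ℂ ((W : Set (Ops F)) ∪ localAlgebra F Rᶜ) :=
    fun T hT i hi B hB => Algebra.adjoin_mono (Set.union_subset_union_left _ hT)
      (subset_adjoin_supportAlgebra _ R ⟨B, hB.mono (Set.singleton_subset_iff.2 hi), rfl⟩)
  refine Algebra.adjoin_le (Set.iUnion_subset fun i B hB => ?_)
  by_cases hP : i ∈ P
  · exact hsupp P (fun _ h => Algebra.subset_adjoin (Or.inl h)) i hP B hB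
  by_cases hQ : i ∈ Q
  · exact hsupp Q (fun _ h => Algebra.subset_adjoin (Or.inr h)) i hQ B hB
  exact Algebra.subset_adjoin (Or.inr (hfar i (by simp [hP, hQ]) B hB))

end Algebras

end Lattice

section Ring

lemma coe_stdSector {N : ℕ} (k : ZMod N) : (stdSector N k : Set (ZMod N)) = {k} :=
  Finset.coe_singleton k

variable {N : ℕ} [NeZero N] {F : ZMod N → Type} [∀ i, Fintype (F i)] [∀ i, DecidableEq (F i)]
  {U : Ops F}

lemma ROdd_stdSector (k : ZMod N) : ROdd F (stdSector N) U k =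
    supportAlgebra F (heis F U '' {A | Localized F A {k, k + 1}}) {k + 1, k + 2} := by
  simp only [ROdd, coe_stdSector, Set.singleton_union]

lemma REven_stdSector (k : ZMod N) : REven F (stdSector N) U k =
    supportAlgebra F (heis F U '' {A | Localized F A {k, k + 1}}) {k - 1, k} := by
  simp only [REven, coe_stdSector, Set.singleton_union]

lemma IsRingQCA.localized_heis_of_singleton (hU : IsRingQCA F (stdSector N) U) {k : ZMod N}
    {B : Ops F} (hB : Localized F B {k}) : Localized F (heis F U B) {k - 1, k, k + 1} := by
  simpa only [coe_stdSector, Set.singleton_union, Set.insert_union] using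
    hU.2 k B (by rwa [coe_stdSector])

end Ring

theorem odd_even_support_algebras_generate_general (N : ℕ) [NeZero N]
    (d : ZMod N → ℕ) (U : Ops (fun n : ZMod N => Fin (d n)))
    (hU : IsRingQCA (fun n : ZMod N => Fin (d n)) (stdSector N) U) (n : ZMod N) :
    (↑(Algebra.adjoin ℂ
        ((ROdd (fun n : ZMod N => Fin (d n)) (stdSector N) U (2 * n) : Set (Ops (fun n : ZMod N => Fin (d n)))) ∪
          (REven (fun n : ZMod N => Fin (d n)) (stdSector N) U (2 * n + 2) : Set (Ops (fun n : ZMod N => Fin (d n)))))) : Set (Ops (fun n : ZMod N => Fin (d n))))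
      = {A | Localized (fun n : ZMod N => Fin (d n)) A ({2 * n + 1, 2 * n + 2} : Set (ZMod N))} := by
  let f := (Unitary.conjStarAlgAut ℂ _ (star ⟨U, hU.1⟩)).toAlgEquiv
  have hf : ⇑f = heis _ U := funext fun A => by simp [f, heis]
  have hfar : ∀ i ∉ ({2 * n, 2 * n + 1} ∪ {2 * n + 2, 2 * n + 2 + 1} : Set (ZMod N)), ∀ B,
      Localized _ B {i} → Localized _ (f B) {2 * n + 1, 2 * n + 2}ᶜ := fun i hi B hB => by
    rw [hf]
    refine (hU.localized_heis_of_singleton hB).mono fun j hj hjR => hi ?_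
    simp only [Set.mem_insert_iff, Set.mem_singleton_iff, Set.mem_union] at hj hjR ⊢
    grind
  have key := adjoin_supportAlgebra_union_eq (f := f.toAlgHom) f.surjective hfar
  rw [ROdd_stdSector, REven_stdSector, show (2 * n + 2 - 1 : ZMod N) = 2 * n + 1 by ring, ← hf]
  exact congrArg SetLike.coe key

/-- For a nearest-neighbour QCA on a ring of `N` sites (`N` even, `N ≥ 6`),
the subalgebra generated by `R_{2n+1} ∪ R_{2n+2}` is exactly the algebra
`A_{2n+1} ⊗ A_{2n+2}` of all operators localized on the sites `2n+1` and `2n+2`. -/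
theorem odd_even_support_algebras_generate (N : ℕ) [NeZero N] (hNeven : Even N) (hN : 6 ≤ N)
    (d : ZMod N → ℕ) (hd : ∀ n, 1 ≤ d n) (U : Ops (fun n : ZMod N => Fin (d n)))
    (hU : IsRingQCA (fun n : ZMod N => Fin (d n)) (stdSector N) U) (n : ZMod N) :
    (↑(Algebra.adjoin ℂ
        ((ROdd (fun n : ZMod N => Fin (d n)) (stdSector N) U (2 * n) : Set (Ops (fun n : ZMod N => Fin (d n)))) ∪
          (REven (fun n : ZMod N => Fin (d n)) (stdSector N) U (2 * n + 2) : Set (Ops (fun n : ZMod N => Fin (d n)))))) : Set (Ops (fun n : ZMod N => Fin (d n))))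
      = {A | Localized (fun n : ZMod N => Fin (d n)) A ({2 * n + 1, 2 * n + 2} : Set (ZMod N))} :=
  odd_even_support_algebras_generate_general N d U hU n

end QCA
end

section
/- Let U be a nearest-neighbour QCA on a ring of N ≥ 5 sites with Hilbert space H = ⨂_{n=0}^{N−1} ℂ^{d_n}. On the doubled system H ⊗ H, let S_n denote the unitary that swaps the two copies of the n-th tensor factor, and let S = ∏_n S_n be the global swap. Then (U ⊗ 1)(1 ⊗ U)* = S · ∏_n ((1 ⊗ U) S_n (1 ⊗ U)*); moreover the unitaries (1 ⊗ U) S_n (1 ⊗ U)* pairwise commute, and each of them is localized on the two copies of the sites {n−1, n, n+1}. In particular U ⊗ U* on the doubled system is a finite-depth circuit of local unitaries. -/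
open scoped Kronecker

namespace QCA

variable {ι : Type} [Fintype ι] [DecidableEq ι]
variable (F : ι → Type) [∀ i, Fintype (F i)] [∀ i, DecidableEq (F i)]

/-- The swap of the two copies of the `n`-th tensor factor of the doubled system. -/
noncomputable def swapAt (N : ℕ) [NeZero N] (d : ZMod N → ℕ) (n : ZMod N) : Ops (fun n : ZMod N => Fin (d n) × Fin (d n)) :=
  fun x y => if x n = Prod.swap (y n) ∧ ∀ m : ZMod N, m ≠ n → x m = y m then 1 else 0

/-- The global swap of the two copies of the doubled system. -/
noncomputable def globalSwap (N : ℕ) [NeZero N] (d : ZMod N → ℕ) : Ops (fun n : ZMod N => Fin (d n) × Fin (d n)) :=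
  fun x y => if ∀ m : ZMod N, x m = Prod.swap (y m) then 1 else 0

/-- `1 ⊗ U` on the doubled system. -/
noncomputable def oneTensor (N : ℕ) [NeZero N] (d : ZMod N → ℕ) (U : Ops (fun n : ZMod N => Fin (d n))) : Ops (fun n : ZMod N => Fin (d n) × Fin (d n)) :=
  tensorOps (fun n : ZMod N => Fin (d n)) (fun n : ZMod N => Fin (d n)) (1 : Ops (fun n : ZMod N => Fin (d n))) U

/-- `U ⊗ 1` on the doubled system. -/
noncomputable def tensorOne (N : ℕ) [NeZero N] (d : ZMod N → ℕ) (U : Ops (fun n : ZMod N => Fin (d n))) : Ops (fun n : ZMod N => Fin (d n) × Fin (d n)) :=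
  tensorOps (fun n : ZMod N => Fin (d n)) (fun n : ZMod N => Fin (d n)) U (1 : Ops (fun n : ZMod N => Fin (d n)))

/-- The conjugated swap `(1 ⊗ U) Sₙ (1 ⊗ U)*`. -/
noncomputable def conjSwapAt (N : ℕ) [NeZero N] (d : ZMod N → ℕ) (U : Ops (fun n : ZMod N => Fin (d n))) (n : ZMod N) :
    Ops (fun n : ZMod N => Fin (d n) × Fin (d n)) :=
  oneTensor N d U * swapAt N d n * star (oneTensor N d U)

end QCA

/-!
Write `V = 1 ⊗ U`. The single-site swaps `Sₙ` are commuting permutation matrices whose product is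
the global swap `S`, so their conjugates `V Sₙ V*` commute and multiply to `V S V*`; since
`S V S = U ⊗ 1`, this gives `S · V S V* = (U ⊗ 1) V*`.

An operator is localized on `R` as soon as it commutes with every matrix unit at every site outside
`R`. A matrix unit `E` at a doubled site `i` factors as `E₁ ⊗ E₂`, so `V* E V = E₁ ⊗ U* E₂ U` is
localized on `{i - 1, i, i + 1}` by causality of `U`. For `n` outside this set `Sₙ` commutes with
`V* E V`, that is, `V Sₙ V*` commutes with `E`.
-/

namespace QCA

open Equiv
open scoped symmDiff

section Localized

variable {ι : Type} {F : ι → Type} {A : Ops F} {R : Set ι}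

theorem Localized.apply_eq (hA : Localized F A R) {x y x' y' : Conf F}
    (hx : ∀ i ∈ R, x i = x' i) (hy : ∀ i ∈ R, y i = y' i)
    (hoff : ∀ i ∉ R, (x i = y i ↔ x' i = y' i)) : A x y = A x' y' := by
  by_cases h : ∀ i ∉ R, x i = y i
  · exact hA.2 x y x' y' hx hy h fun i hi => (hoff i hi).1 (h i hi)
  · push Not at h
    obtain ⟨i, hi, hne⟩ := h
    have hxy : A x y = 0 := by_contra fun h0 => hne (hA.1 x y h0 i hi)
    have hxy' : A x' y' = 0 := by_contra fun h0 => hne ((hoff i hi).2 (hA.1 x' y' h0 i hi))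
    rw [hxy, hxy']

theorem Localized.mono_s11 {R' : Set ι} (hA : Localized F A R) (hR : R ⊆ R') :
    Localized F A R' := by
  refine ⟨fun x y h0 i hi => hA.1 x y h0 i fun h => hi (hR h), ?_⟩
  intro x y x' y' hx hy hxy hx'y'
  refine hA.apply_eq (fun i hi => hx i (hR hi)) (fun i hi => hy i (hR hi)) fun i _ => ?_
  by_cases hi' : i ∈ R'
  · rw [hx i hi', hy i hi']
  · simp [hxy i hi', hx'y' i hi']

end Localized

section MatrixUnits

variable {ι : Type} [Fintype ι] [DecidableEq ι] {F : ι → Type} [∀ i, DecidableEq (F i)]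

theorem embedAt_localized (i : ι) (B : Matrix (F i) (F i) ℂ) :
    Localized F (embedAt F i B) {i} := by
  refine ⟨fun x y h0 j hj => ?_, fun x y x' y' hx hy hxy hx'y' => ?_⟩
  · by_contra hne
    exact h0 (by simp [embedAt, show ¬ ∀ k, k ≠ i → x k = y k from fun h => hne (h j hj)])
  · have hoff : (∀ j, j ≠ i → x j = y j) ↔ ∀ j, j ≠ i → x' j = y' j :=
      ⟨fun _ j hj => hx'y' j hj, fun _ j hj => hxy j hj⟩
    simp only [embedAt, hx i rfl, hy i rfl, if_congr hoff rfl rfl]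

theorem embedAt_single_apply (i : ι) (s t : F i) (x y : Conf F) :
    embedAt F i (Matrix.single s t 1) x y =
      if y i = t ∧ x = Function.update y i s then 1 else 0 := by
  have hx : x = Function.update y i s ↔ x i = s ∧ ∀ j, j ≠ i → x j = y j := by
    rw [Function.eq_update_iff]
  simp only [embedAt, Matrix.single_apply, ite_zero_mul_ite_zero, one_mul, hx]
  exact if_congr (by grind) rfl rfl

variable [∀ i, Fintype (F i)] {A : Ops F}

theorem mul_embedAt_single_apply (i : ι) (s t : F i) (x y : Conf F) :
    (A * embedAt F i (Matrix.single s t 1)) x y =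
      if y i = t then A x (Function.update y i s) else 0 := by
  simp [Matrix.mul_apply, embedAt_single_apply, ite_and]

theorem embedAt_single_mul_apply (i : ι) (s t : F i) (x y : Conf F) :
    (embedAt F i (Matrix.single s t 1) * A) x y =
      if x i = s then A (Function.update x i t) y else 0 := by
  have hxz : ∀ z : Conf F, (z i = t ∧ x = Function.update z i s) ↔
      (x i = s ∧ z = Function.update x i t) := by
    intro z
    simp only [Function.eq_update_iff]
    grind
  simp [Matrix.mul_apply, embedAt_single_apply, hxz, ite_and]

end MatrixUnits

theorem apply_eq_of_update_invariant {ι : Type} [DecidableEq ι] {F : ι → Type} {β : Type}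
    (f : Conf F → Conf F → β) (s : Finset ι)
    (hf : ∀ i ∈ s, ∀ (x y : Conf F) (t : F i), x i = y i →
      f x y = f (Function.update x i t) (Function.update y i t))
    {x y x' y' : Conf F} (hxy : ∀ i ∈ s, x i = y i) (hx'y' : ∀ i ∈ s, x' i = y' i)
    (hx : ∀ i ∉ s, x i = x' i) (hy : ∀ i ∉ s, y i = y' i) : f x y = f x' y' := by
  induction s using Finset.induction_on generalizing x y with
  | empty =>
    rw [funext fun i => hx i (Finset.notMem_empty i), funext fun i => hy i (Finset.notMem_empty i)]
  | @insert a s ha ih =>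
    have hx'a : x' a = y' a := hx'y' a (Finset.mem_insert_self a s)
    rw [hf a (Finset.mem_insert_self a s) x y (x' a) (hxy a (Finset.mem_insert_self a s))]
    refine ih (fun i hi x y t => hf i (Finset.mem_insert_of_mem hi) x y t)
      (fun i hi => ?_) (fun i hi => hx'y' i (Finset.mem_insert_of_mem hi)) (fun i hi => ?_)
      (fun i hi => ?_)
    · have hia : i ≠ a := fun h => ha (h ▸ hi)
      simp [hia, hxy i (Finset.mem_insert_of_mem hi)]
    · by_cases hia : i = a
      · subst hia; simp
      · simp [hia, hx i (by simp [hia, hi])]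
    · by_cases hia : i = a
      · subst hia; simp [hx'a]
      · simp [hia, hy i (by simp [hia, hi])]

section Commutant

variable {ι : Type} [Fintype ι] [DecidableEq ι] {F : ι → Type} [∀ i, Fintype (F i)]
  [∀ i, DecidableEq (F i)]

theorem localized_of_forall_commute {A : Ops F} {R : Set ι}
    (h : ∀ i ∉ R, ∀ s t : F i, Commute A (embedAt F i (Matrix.single s t 1))) :
    Localized F A R := by
  have key : ∀ i ∉ R, ∀ (s t : F i) (x y : Conf F),
      (if y i = t then A x (Function.update y i s) else 0) =
        if x i = s then A (Function.update x i t) y else 0 := fun i hi s t x y => by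
    rw [← mul_embedAt_single_apply, (h i hi s t).eq, embedAt_single_mul_apply]
  have hdiag : ∀ x y : Conf F, A x y ≠ 0 → ∀ i ∉ R, x i = y i := by
    intro x y hA i hi
    by_contra hne
    exact hA (by simpa [hne] using key i hi (y i) (y i) x y)
  have hupdate : ∀ i ∉ R, ∀ (x y : Conf F) (t : F i), x i = y i →
      A x y = A (Function.update x i t) (Function.update y i t) := by
    intro i hi x y t hxy
    simpa [hxy] using key i hi (x i) t x (Function.update y i t)
  classical
  refine ⟨hdiag, fun x y x' y' hx hy hxy hx'y' => ?_⟩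
  refine apply_eq_of_update_invariant A (Finset.univ.filter (· ∉ R))
    (fun i hi => hupdate i (Finset.mem_filter.1 hi).2) ?_ ?_ ?_ ?_ <;> simp_all

end Commutant

section TensorProduct

variable {ι : Type} {F G : ι → Type} [∀ i, Fintype (G i)] [∀ i, DecidableEq (G i)]

theorem tensorOps_apply (A : Ops F) (B : Ops G) (X Y : Conf fun i => F i × G i) :
    tensorOps F G A B X Y =
      A (fun i => (X i).1) (fun i => (Y i).1) * B (fun i => (X i).2) (fun i => (Y i).2) :=
  rfl

theorem star_tensorOps (A : Ops F) (B : Ops G) :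
    star (tensorOps F G A B) = tensorOps F G (star A) (star B) := by
  ext X Y
  simp only [Matrix.star_apply, tensorOps_apply, star_mul']

theorem Localized.tensorOps {A : Ops F} {B : Ops G} {R R' : Set ι}
    (hA : Localized F A R) (hB : Localized G B R') :
    Localized (fun i => F i × G i) (QCA.tensorOps F G A B) (R ∪ R') := by
  have hA' := hA.mono_s11 (Set.subset_union_left (t := R'))
  have hB' := hB.mono_s11 (Set.subset_union_right (s := R))
  refine ⟨fun X Y h0 i hi => ?_, fun X Y X' Y' hX hY hXY hX'Y' => ?_⟩
  · obtain ⟨hA0, hB0⟩ := mul_ne_zero_iff.1 h0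
    exact Prod.ext (hA'.1 _ _ hA0 i hi) (hB'.1 _ _ hB0 i hi)
  · rw [tensorOps_apply, tensorOps_apply]
    congr 1
    · exact hA'.2 _ _ _ _ (by simp_all) (by simp_all) (by simp_all) (by simp_all)
    · exact hB'.2 _ _ _ _ (by simp_all) (by simp_all) (by simp_all) (by simp_all)

variable [Fintype ι] [∀ i, DecidableEq (F i)]

theorem tensorOps_one : tensorOps F G 1 1 = 1 := by
  simp only [tensorOps, Matrix.one_kronecker_one, Matrix.reindex_apply, Matrix.submatrix_one_equiv]

variable [DecidableEq ι]

theorem embedAt_single_prod (i : ι) (a c : F i) (b e : G i) :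
    embedAt (fun j => F j × G j) i (Matrix.single (a, b) (c, e) 1) =
      tensorOps F G (embedAt F i (Matrix.single a c 1))
        (embedAt G i (Matrix.single b e 1)) := by
  ext X Y
  simp only [tensorOps_apply, embedAt_single_apply, ite_zero_mul_ite_zero, one_mul]
  refine if_congr ?_ rfl rfl
  simp only [Function.eq_update_iff, Prod.ext_iff]
  grind

variable [∀ i, Fintype (F i)]

omit [∀ i, DecidableEq (F i)] in
theorem tensorOps_mul (A C : Ops F) (B D : Ops G) :
    tensorOps F G A B * tensorOps F G C D = tensorOps F G (A * C) (B * D) := by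
  simp only [tensorOps, Matrix.reindex_apply, Matrix.submatrix_mul_equiv, Matrix.mul_kronecker_mul]

theorem tensorOps_mem_unitaryGroup {A : Ops F} {B : Ops G}
    (hA : A ∈ Matrix.unitaryGroup (Conf F) ℂ) (hB : B ∈ Matrix.unitaryGroup (Conf G) ℂ) :
    tensorOps F G A B ∈ Matrix.unitaryGroup (Conf fun i => F i × G i) ℂ := by
  rw [Matrix.mem_unitaryGroup_iff] at hA hB ⊢
  rw [star_tensorOps, tensorOps_mul, hA, hB, tensorOps_one]

end TensorProduct

theorem permMatrix_mem_unitaryGroup {n : Type} [Fintype n] [DecidableEq n] (σ : Perm n) :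
    σ.permMatrix ℂ ∈ Matrix.unitaryGroup n ℂ := by
  rw [Matrix.mem_unitaryGroup_iff', Matrix.star_eq_conjTranspose, Matrix.conjTranspose_permMatrix,
    ← Matrix.permMatrix_mul, mul_inv_cancel, Matrix.permMatrix_one]

section Swap

variable {ι : Type} [DecidableEq ι] {F : ι → Type}

def swapOn (s : Finset ι) : Perm (Conf fun i => F i × F i) where
  toFun X i := if i ∈ s then (X i).swap else X i
  invFun X i := if i ∈ s then (X i).swap else X i
  left_inv X := funext fun i => by by_cases hi : i ∈ s <;> simp [hi]
  right_inv X := funext fun i => by by_cases hi : i ∈ s <;> simp [hi]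

theorem swapOn_apply (s : Finset ι) (X : Conf fun i => F i × F i) (i : ι) :
    swapOn s X i = if i ∈ s then (X i).swap else X i :=
  rfl

theorem swapOn_symm (s : Finset ι) : (swapOn (F := F) s).symm = swapOn s :=
  rfl

theorem swapOn_mul_swapOn (s t : Finset ι) :
    swapOn (F := F) s * swapOn t = swapOn (s ∆ t) := by
  ext X i : 2
  simp only [Perm.mul_apply, swapOn_apply, Finset.mem_symmDiff]
  by_cases hs : i ∈ s <;> by_cases ht : i ∈ t <;> simp [hs, ht]

theorem swapOn_empty : swapOn (F := F) ∅ = 1 := by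
  ext X i : 2
  simp [swapOn_apply]

theorem swapOn_mul_self (s : Finset ι) : swapOn (F := F) s * swapOn s = 1 := by
  rw [swapOn_mul_swapOn, symmDiff_self, Finset.bot_eq_empty, swapOn_empty]

theorem commute_swapOn (s t : Finset ι) : Commute (swapOn (F := F) s) (swapOn t) := by
  rw [Commute, SemiconjBy, swapOn_mul_swapOn, swapOn_mul_swapOn, symmDiff_comm]

variable [Fintype ι] [∀ i, Fintype (F i)] [∀ i, DecidableEq (F i)]

theorem noncommProd_permMatrix_swapOn (s : Finset ι) (hs) :
    s.noncommProd (fun i => (swapOn (F := F) {i}).permMatrix ℂ) hs = (swapOn s).permMatrix ℂ := by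
  induction s using Finset.induction_on with
  | empty => rw [Finset.noncommProd_empty, swapOn_empty, Matrix.permMatrix_one]
  | @insert a s ha ih =>
    rw [Finset.noncommProd_insert_of_notMem _ _ _ _ ha, ih, ← Matrix.permMatrix_mul,
      swapOn_mul_swapOn, symmDiff_comm, Finset.symmDiff_eq_union (by simpa using ha),
      ← Finset.insert_eq]

theorem commute_permMatrix_swapOn_of_localized {s : Finset ι} {R : Set ι}
    {T : Ops fun i => F i × F i} (hT : Localized _ T R) (hsR : Disjoint (s : Set ι) R) :
    Commute ((swapOn s).permMatrix ℂ) T := by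
  rw [Commute, SemiconjBy, PEquiv.toMatrix_toPEquiv_mul, PEquiv.mul_toMatrix_toPEquiv]
  ext X Y
  simp only [Matrix.submatrix_apply, id, swapOn_symm]
  have hR : ∀ i ∈ R, i ∉ s := fun i hi => Set.disjoint_right.1 hsR hi
  refine hT.apply_eq (fun i hi => ?_) (fun i hi => ?_) fun i _ => ?_
  · simp [swapOn_apply, hR i hi]
  · simp [swapOn_apply, hR i hi]
  · by_cases hi : i ∈ s <;> simp [swapOn_apply, hi, Prod.swap_eq_iff_eq_swap]

theorem permMatrix_swapOn_univ_mul_tensorOps (A B : Ops F) :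
    (swapOn Finset.univ).permMatrix ℂ * tensorOps F F A B =
      tensorOps F F B A * (swapOn Finset.univ).permMatrix ℂ := by
  rw [PEquiv.toMatrix_toPEquiv_mul, PEquiv.mul_toMatrix_toPEquiv]
  ext X Y
  simp only [Matrix.submatrix_apply, id, swapOn_symm, tensorOps_apply, swapOn_apply,
    Finset.mem_univ, if_true, Prod.fst_swap, Prod.snd_swap]
  exact mul_comm _ _

end Swap

theorem mem_neighbours_comm {G : Type} [AddGroup G] [One G] (i n : G) :
    i ∈ ({n - 1, n, n + 1} : Set G) ↔ n ∈ ({i - 1, i, i + 1} : Set G) := by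
  simp only [Set.mem_insert_iff, Set.mem_singleton_iff, eq_sub_iff_add_eq]
  grind

theorem IsRingQCA.localized_heis_embedAt {N : ℕ} [NeZero N] {F : ZMod N → Type} [∀ n, Fintype (F n)]
    [∀ n, DecidableEq (F n)] {U : Ops F} (hU : IsRingQCA F (stdSector N) U) (i : ZMod N)
    (B : Matrix (F i) (F i) ℂ) :
    Localized F (heis F U (embedAt F i B)) {i - 1, i, i + 1} := by
  refine (hU.2 i _ (by simpa [stdSector] using embedAt_localized i B)).mono_s11 fun j hj => ?_
  simp only [stdSector, Finset.coe_singleton, Set.mem_union, Set.mem_singleton_iff] at hj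
  simp only [Set.mem_insert_iff, Set.mem_singleton_iff]
  tauto

section Doubled

variable (N : ℕ) [NeZero N] (d : ZMod N → ℕ)

theorem swapAt_eq_permMatrix (n : ZMod N) : swapAt N d n = (swapOn {n}).permMatrix ℂ := by
  ext X Y
  simp only [swapAt, PEquiv.toMatrix_apply, Equiv.toPEquiv_apply, Option.mem_def, Option.some.injEq]
  refine if_congr ?_ rfl rfl
  rw [funext_iff]
  refine ⟨fun h m => ?_, fun h => ⟨?_, fun m hm => ?_⟩⟩
  · by_cases hm : m = n
    · subst hm; simp [swapOn_apply, h.1]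
    · simp [swapOn_apply, hm, h.2 m hm]
  · simp [← h n, swapOn_apply]
  · simp [← h m, swapOn_apply, hm]

theorem globalSwap_eq_permMatrix : globalSwap N d = (swapOn Finset.univ).permMatrix ℂ := by
  ext X Y
  simp only [globalSwap, PEquiv.toMatrix_apply, Equiv.toPEquiv_apply, Option.mem_def,
    Option.some.injEq]
  refine if_congr ?_ rfl rfl
  simp [funext_iff, swapOn_apply, Prod.swap_eq_iff_eq_swap]

theorem swapAt_mem_unitaryGroup (n : ZMod N) :
    swapAt N d n ∈ Matrix.unitaryGroup (Conf fun n : ZMod N => Fin (d n) × Fin (d n)) ℂ := by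
  rw [swapAt_eq_permMatrix]
  exact permMatrix_mem_unitaryGroup _

theorem commute_swapAt (m n : ZMod N) : Commute (swapAt N d m) (swapAt N d n) := by
  rw [swapAt_eq_permMatrix, swapAt_eq_permMatrix, Commute, SemiconjBy, ← Matrix.permMatrix_mul,
    ← Matrix.permMatrix_mul, (commute_swapOn _ _).eq]

theorem commute_swapAt_of_localized {n : ZMod N} {R : Set (ZMod N)}
    {T : Ops fun n : ZMod N => Fin (d n) × Fin (d n)} (hT : Localized _ T R) (hn : n ∉ R) :
    Commute (swapAt N d n) T := by
  rw [swapAt_eq_permMatrix]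
  exact commute_permMatrix_swapOn_of_localized hT (by simpa using hn)

theorem noncommProd_swapAt (hs) : Finset.univ.noncommProd (swapAt N d) hs = globalSwap N d := by
  rw [globalSwap_eq_permMatrix, ← noncommProd_permMatrix_swapOn Finset.univ fun m _ n _ _ => by
    simpa only [swapAt_eq_permMatrix] using commute_swapAt N d m n]
  exact Finset.noncommProd_congr rfl (fun n _ => swapAt_eq_permMatrix N d n) hs

theorem globalSwap_mul_self : globalSwap N d * globalSwap N d = 1 := by
  rw [globalSwap_eq_permMatrix, ← Matrix.permMatrix_mul, swapOn_mul_self, Matrix.permMatrix_one]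

variable {N d} (U : Ops fun n : ZMod N => Fin (d n))

theorem globalSwap_mul_oneTensor :
    globalSwap N d * oneTensor N d U = tensorOne N d U * globalSwap N d := by
  rw [globalSwap_eq_permMatrix]
  exact permMatrix_swapOn_univ_mul_tensorOps 1 U

theorem tensorOne_mul_star_oneTensor :
    tensorOne N d U * star (oneTensor N d U) =
      tensorOps (fun n : ZMod N => Fin (d n)) (fun n : ZMod N => Fin (d n)) U (star U) := by
  rw [tensorOne, oneTensor, star_tensorOps, star_one, tensorOps_mul, mul_one, one_mul]

theorem oneTensor_mem_unitaryGroup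
    (hU : U ∈ Matrix.unitaryGroup (Conf fun n : ZMod N => Fin (d n)) ℂ) :
    oneTensor N d U ∈ Matrix.unitaryGroup (Conf fun n : ZMod N => Fin (d n) × Fin (d n)) ℂ :=
  tensorOps_mem_unitaryGroup (one_mem _) hU

theorem conjSwapAt_eq_conjStarAlgAut
    (hU : U ∈ Matrix.unitaryGroup (Conf fun n : ZMod N => Fin (d n)) ℂ) (n : ZMod N) :
    conjSwapAt N d U n =
      Unitary.conjStarAlgAut ℂ _ ⟨oneTensor N d U, oneTensor_mem_unitaryGroup U hU⟩
        (swapAt N d n) :=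
  rfl

end Doubled

section RingQCA

variable {N : ℕ} [NeZero N] {d : ZMod N → ℕ} {U : Ops fun n : ZMod N => Fin (d n)}

theorem commute_conjSwapAt (hU : U ∈ Matrix.unitaryGroup (Conf fun n : ZMod N => Fin (d n)) ℂ)
    (m n : ZMod N) : Commute (conjSwapAt N d U m) (conjSwapAt N d U n) := by
  rw [conjSwapAt_eq_conjStarAlgAut U hU, conjSwapAt_eq_conjStarAlgAut U hU]
  exact (commute_swapAt N d m n).map _

theorem noncommProd_conjSwapAt (hU : U ∈ Matrix.unitaryGroup (Conf fun n : ZMod N => Fin (d n)) ℂ)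
    (hc) : Finset.univ.noncommProd (conjSwapAt N d U) hc =
      oneTensor N d U * globalSwap N d * star (oneTensor N d U) := by
  rw [← noncommProd_swapAt N d fun m _ n _ _ => commute_swapAt N d m n]
  exact (Finset.map_noncommProd _ _ _
    (Unitary.conjStarAlgAut ℂ _ ⟨oneTensor N d U, oneTensor_mem_unitaryGroup U hU⟩)).symm

theorem IsRingQCA.localized_heis_oneTensor_embedAt_single
    (hU : IsRingQCA (fun n : ZMod N => Fin (d n)) (stdSector N) U) (i : ZMod N)
    (s t : Fin (d i) × Fin (d i)) :
    Localized _ (heis _ (oneTensor N d U) (embedAt _ i (Matrix.single s t 1)))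
      {i - 1, i, i + 1} := by
  obtain ⟨a, b⟩ := s
  obtain ⟨c, e⟩ := t
  rw [heis, embedAt_single_prod, oneTensor, star_tensorOps, star_one, tensorOps_mul, tensorOps_mul,
    one_mul, mul_one]
  exact ((embedAt_localized i _).tensorOps (hU.localized_heis_embedAt i _)).mono_s11
    (Set.union_subset (by simp) subset_rfl)

theorem IsRingQCA.localized_conjSwapAt
    (hU : IsRingQCA (fun n : ZMod N => Fin (d n)) (stdSector N) U) (n : ZMod N) :
    Localized _ (conjSwapAt N d U n) {n - 1, n, n + 1} := by
  refine localized_of_forall_commute fun i hi s t => ?_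
  rw [conjSwapAt_eq_conjStarAlgAut U hU.1]
  set φ := Unitary.conjStarAlgAut ℂ _ ⟨oneTensor N d U, oneTensor_mem_unitaryGroup U hU.1⟩
  have h : Commute (swapAt N d n) (φ.symm (embedAt _ i (Matrix.single s t 1))) :=
    commute_swapAt_of_localized N d (hU.localized_heis_oneTensor_embedAt_single i s t)
      ((mem_neighbours_comm i n).not.1 hi)
  simpa only [StarAlgEquiv.apply_symm_apply] using h.map φ

end RingQCA

theorem unitarity_causality_localizability_general (N : ℕ) [NeZero N]
    (d : ZMod N → ℕ) (U : Ops (fun n : ZMod N => Fin (d n)))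
    (hU : IsRingQCA (fun n : ZMod N => Fin (d n)) (stdSector N) U) :
    (∀ n : ZMod N, swapAt N d n ∈ Matrix.unitaryGroup (Conf (fun n : ZMod N => Fin (d n) × Fin (d n))) ℂ) ∧
    tensorOps (fun n : ZMod N => Fin (d n)) (fun n : ZMod N => Fin (d n)) U (star U) = tensorOne N d U * star (oneTensor N d U) ∧
    (∀ m n : ZMod N, Commute (conjSwapAt N d U m) (conjSwapAt N d U n)) ∧
    (∀ n : ZMod N, Localized (fun n : ZMod N => Fin (d n) × Fin (d n)) (conjSwapAt N d U n) ({n - 1, n, n + 1} : Set (ZMod N))) ∧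
    (∀ hs : ((Finset.univ : Finset (ZMod N)) : Set (ZMod N)).Pairwise
        fun m n => Commute (swapAt N d m) (swapAt N d n),
      globalSwap N d = Finset.univ.noncommProd (swapAt N d) hs) ∧
    ∀ hc : ((Finset.univ : Finset (ZMod N)) : Set (ZMod N)).Pairwise
        fun m n => Commute (conjSwapAt N d U m) (conjSwapAt N d U n),
      tensorOne N d U * star (oneTensor N d U)
        = globalSwap N d * Finset.univ.noncommProd (conjSwapAt N d U) hc := by
  refine ⟨swapAt_mem_unitaryGroup N d, (tensorOne_mul_star_oneTensor U).symm,
    commute_conjSwapAt hU.1, hU.localized_conjSwapAt, fun hs => (noncommProd_swapAt N d hs).symm,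
    fun hc => ?_⟩
  calc tensorOne N d U * star (oneTensor N d U)
      = tensorOne N d U * (globalSwap N d * globalSwap N d) * star (oneTensor N d U) := by
        rw [globalSwap_mul_self, mul_one]
    _ = globalSwap N d * (oneTensor N d U * globalSwap N d * star (oneTensor N d U)) := by
        simp only [← mul_assoc, globalSwap_mul_oneTensor]
    _ = globalSwap N d * Finset.univ.noncommProd (conjSwapAt N d U) hc := by
        rw [noncommProd_conjSwapAt hU.1]

/-- For a nearest-neighbour QCA `U` on a ring of `N ≥ 5` sites, on the
doubled system one has `(U ⊗ 1)(1 ⊗ U)* = S ∏ₙ (1 ⊗ U) Sₙ (1 ⊗ U)*`; the conjugated swaps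
pairwise commute and each is localized on (both copies of) the sites `{n-1, n, n+1}`.  In
particular `U ⊗ U*` is a finite-depth circuit of local unitaries. -/
theorem unitarity_causality_localizability (N : ℕ) [NeZero N] (hN : 5 ≤ N)
    (d : ZMod N → ℕ) (hd : ∀ n, 1 ≤ d n) (U : Ops (fun n : ZMod N => Fin (d n)))
    (hU : IsRingQCA (fun n : ZMod N => Fin (d n)) (stdSector N) U) :
    (∀ n : ZMod N, swapAt N d n ∈ Matrix.unitaryGroup (Conf (fun n : ZMod N => Fin (d n) × Fin (d n))) ℂ) ∧
    tensorOps (fun n : ZMod N => Fin (d n)) (fun n : ZMod N => Fin (d n)) U (star U) = tensorOne N d U * star (oneTensor N d U) ∧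
    (∀ m n : ZMod N, Commute (conjSwapAt N d U m) (conjSwapAt N d U n)) ∧
    (∀ n : ZMod N, Localized (fun n : ZMod N => Fin (d n) × Fin (d n)) (conjSwapAt N d U n) ({n - 1, n, n + 1} : Set (ZMod N))) ∧
    (∀ hs : ((Finset.univ : Finset (ZMod N)) : Set (ZMod N)).Pairwise
        fun m n => Commute (swapAt N d m) (swapAt N d n),
      globalSwap N d = Finset.univ.noncommProd (swapAt N d) hs) ∧
    ∀ hc : ((Finset.univ : Finset (ZMod N)) : Set (ZMod N)).Pairwise
        fun m n => Commute (conjSwapAt N d U m) (conjSwapAt N d U n),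
      tensorOne N d U * star (oneTensor N d U)
        = globalSwap N d * Finset.univ.noncommProd (conjSwapAt N d U) hc :=
  unitarity_causality_localizability_general N d U hU

end QCA
end
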